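/- Let R be a finite commutative weak nil clean ring whose only idempotents are 0 and 1. Then {1, 2} is a dominating set for the nil clean graph G_N(R): every element of R either lies in {1, 2} or is adjacent to 1 or to 2. -/

import Mathlib

def IsNilClean {R : Type*} [CommRing R] (r : R) : Prop :=
  ∃ n e : R, IsNilpotent n ∧ IsIdempotentElem e ∧ r = n + e

def nilCleanGraph (R : Type*) [CommRing R] : SimpleGraph R where
  Adj x y := x ≠ y ∧ IsNilClean (x + y)
  symm := by
    constructor
    rintro x y ⟨hxy, n, e, hn, he, h⟩
    exact ⟨hxy.symm, n, e, hn, he, by rwa [add_comm]⟩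
  loopless := by constructor; rintro x ⟨h, -⟩; exact h rfl

/-
Apply weak nil cleanness to `a + 1`. A decomposition `a + 1 = n + e` makes `a` adjacent to `1`.
Otherwise `a + 1 = n - e` with `e ∈ {0, 1}`: for `e = 0` the sum `a + 1 = n` is still nil clean,
and for `e = 1` the sum `a + 2 = n` is nilpotent, so `a` is adjacent to `2`.
-/

theorem IsNilpotent.isNilClean {R : Type*} [CommRing R] {n : R} (hn : IsNilpotent n) :
    IsNilClean n :=
  ⟨n, 0, hn, IsIdempotentElem.zero, (add_zero n).symm⟩

theorem isNilClean_or_isNilClean_add_one {R : Type*} [CommRing R]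
    (hid : ∀ e : R, IsIdempotentElem e → e = 0 ∨ e = 1) {r : R}
    (hr : ∃ n e : R, IsNilpotent n ∧ IsIdempotentElem e ∧ (r = n + e ∨ r = n - e)) :
    IsNilClean r ∨ IsNilClean (r + 1) := by
  obtain ⟨n, e, hn, he, hsum | hdiff⟩ := hr
  · exact Or.inl ⟨n, e, hn, he, hsum⟩
  rcases hid e he with rfl | rfl
  · exact Or.inl (by rw [hdiff, sub_zero]; exact hn.isNilClean)
  · exact Or.inr (by rw [hdiff, sub_add_cancel]; exact hn.isNilClean)

theorem stmt12_general (R : Type*) [CommRing R]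
    (hwnc : ∀ r : R, ∃ n e : R, IsNilpotent n ∧ IsIdempotentElem e ∧
      (r = n + e ∨ r = n - e))
    (hid : ∀ e : R, IsIdempotentElem e → e = 0 ∨ e = 1) :
    ∀ a : R, a = 1 ∨ a = 2 ∨ (nilCleanGraph R).Adj a 1 ∨ (nilCleanGraph R).Adj a 2 := by
  intro a
  by_cases h1 : a = 1
  · exact Or.inl h1
  by_cases h2 : a = 2
  · exact Or.inr (Or.inl h2)
  rcases isNilClean_or_isNilClean_add_one hid (hwnc (a + 1)) with h | h
  · exact Or.inr (Or.inr (Or.inl ⟨h1, h⟩))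
  · rw [add_assoc, one_add_one_eq_two] at h
    exact Or.inr (Or.inr (Or.inr ⟨h2, h⟩))

theorem stmt12 (R : Type*) [CommRing R] [Fintype R]
    (hwnc : ∀ r : R, ∃ n e : R, IsNilpotent n ∧ IsIdempotentElem e ∧
      (r = n + e ∨ r = n - e))
    (hid : ∀ e : R, IsIdempotentElem e → e = 0 ∨ e = 1) :
    ∀ a : R, a = 1 ∨ a = 2 ∨ (nilCleanGraph R).Adj a 1 ∨ (nilCleanGraph R).Adj a 2 :=
  stmt12_general R hwnc hid
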